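/- arXiv:2501.01296 — 2 statements merged into one kernel-verified Lean document; each statement's English description precedes it below -/
import Mathlib

section
/- Let S_λ be a bounded left-invertible weighted shift on a rootless, leafless directed tree T = (V,E). Then for every integer n ≥ 1, the range of S_λ^n equals the set of f ∈ ℓ²(V) such that the function f/λ^{(n)} is constant on Chi^n(v) for every v ∈ V. -/
/-- A countably infinite, leafless, rootless directed tree, encoded by its parent
function: every vertex has a child (leafless), there are no circuits, and the tree
is connected (any two vertices have a common ancestor). -/
structure RootlessTree (V : Type*) where
  par : V → V
  leafless : ∀ u : V, ∃ w : V, par w = u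
  acyclic : ∀ (u : V) (n : ℕ), 0 < n → par^[n] u ≠ u
  connected : ∀ u w : V, ∃ k l : ℕ, par^[k] u = par^[l] w

/-- `Aset T v n` is the set `A(v,n)`: `A(v,0) = {v}` and
`A(v,n) = Chi^n(par^n(v)) \ Chi^{n-1}(par^{n-1}(v))` for `n ≥ 1`. -/
def Aset {V : Type*} (T : RootlessTree V) (v : V) : ℕ → Set V
  | 0 => {v}
  | n + 1 => {w | T.par^[n + 1] w = T.par^[n + 1] v ∧ ¬ T.par^[n] w = T.par^[n] v}

open scoped ENNReal

/-- `lamN T wt n u` is `λ⁽ⁿ⁾(u) = λ_u · λ_{par u} ⋯ λ_{parⁿ⁻¹ u}`. -/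
def lamN {V : Type*} (T : RootlessTree V) (wt : V → ℝ) (n : ℕ) (u : V) : ℝ :=
  ∏ j ∈ Finset.range n, wt (T.par^[j] u)

/-- `alphaFun T wt v = α_λ(v) = Σ_{n≥0} Σ_{u ∈ A(v,n)} (λ⁽ⁿ⁾(u)/λ⁽ⁿ⁾(v))²`,
as an extended nonnegative real. -/
noncomputable def alphaFun {V : Type*} (T : RootlessTree V) (wt : V → ℝ) (v : V) : ℝ≥0∞ :=
  ∑' n : ℕ, ∑' u : (Aset T v n), ENNReal.ofReal ((lamN T wt n u / lamN T wt n v) ^ 2)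


/-!
Iterating the shift gives `(S^n g)(w) = λ⁽ⁿ⁾(w) g(parⁿ w)`, which immediately shows that `f/λ⁽ⁿ⁾`
is constant on the fibres of `parⁿ` for `f` in the range. Conversely, such an `f` is
`S^n g` for the function `g` reading off the common value of `f/λ⁽ⁿ⁾` on each fibre (the fibres
are nonempty because the tree is leafless), and the only issue is that `g ∈ ℓ²`. Left-invertibility
makes `S^n` bounded below by some `cⁿ > 0`; applied to the finite truncations `g_s` of `g`, whose
images are pointwise dominated by `f`, it bounds `‖g_s‖` by `‖f‖ / cⁿ` uniformly in `s`.
-/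

open scoped lp

namespace RootlessTree

theorem surjective_par {V : Type*} (T : RootlessTree V) : Function.Surjective T.par :=
  T.leafless

end RootlessTree

section lamN

variable {V : Type*} (T : RootlessTree V) (wt : V → ℝ)

theorem lamN_pos (hwt : ∀ u, 0 < wt u) (n : ℕ) (u : V) : 0 < lamN T wt n u :=
  Finset.prod_pos fun _ _ => hwt _

theorem lamN_ofReal_ne_zero {𝕜 : Type*} [RCLike 𝕜] (hwt : ∀ u, 0 < wt u) (n : ℕ) (u : V) :
    (lamN T wt n u : 𝕜) ≠ 0 :=
  RCLike.ofReal_ne_zero.mpr (lamN_pos T wt hwt n u).ne'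

theorem lamN_succ (n : ℕ) (u : V) :
    lamN T wt (n + 1) u = lamN T wt n u * wt (T.par^[n] u) :=
  Finset.prod_range_succ _ _

end lamN

theorem ContinuousLinearMap.pow_mul_norm_le_norm_pow_apply {𝕜 E : Type*} [NormedField 𝕜]
    [SeminormedAddCommGroup E] [NormedSpace 𝕜 E] {A : E →L[𝕜] E} {c : ℝ} (hc : 0 ≤ c)
    (hA : ∀ x, c * ‖x‖ ≤ ‖A x‖) (n : ℕ) (x : E) : c ^ n * ‖x‖ ≤ ‖(A ^ n) x‖ := by
  induction n with
  | zero => simp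
  | succ n ih =>
    calc c ^ (n + 1) * ‖x‖ = c * (c ^ n * ‖x‖) := by ring
      _ ≤ c * ‖(A ^ n) x‖ := by gcongr
      _ ≤ ‖A ((A ^ n) x)‖ := hA _
      _ = ‖(A ^ (n + 1)) x‖ := by rw [pow_succ', mul_apply_eq_comp]

section WeightedShift

variable {𝕜 V : Type*} [RCLike 𝕜] {T : RootlessTree V} {wt : V → ℝ}
  {S : ℓ²(V, 𝕜) →L[𝕜] ℓ²(V, 𝕜)}

theorem weightedShift_pow_apply (hS : ∀ f v, S f v = (wt v : 𝕜) * f (T.par v))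
    (n : ℕ) (f : ℓ²(V, 𝕜)) (v : V) :
    (S ^ n) f v = (lamN T wt n v : 𝕜) * f (T.par^[n] v) := by
  induction n generalizing f with
  | zero => simp [lamN]
  | succ n ih =>
    rw [pow_succ, mul_apply_eq_comp, ih, hS, lamN_succ,
      Function.iterate_succ_apply']
    push_cast
    ring

theorem weightedShift_pow_div_lamN_eq (hwt : ∀ u, 0 < wt u)
    (hS : ∀ f v, S f v = (wt v : 𝕜) * f (T.par v)) (n : ℕ) (g : ℓ²(V, 𝕜)) {w₁ w₂ : V}
    (h : T.par^[n] w₁ = T.par^[n] w₂) :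
    (S ^ n) g w₁ / (lamN T wt n w₁ : 𝕜) = (S ^ n) g w₂ / (lamN T wt n w₂ : 𝕜) := by
  rw [weightedShift_pow_apply hS, weightedShift_pow_apply hS, h,
    mul_div_cancel_left₀ _ (lamN_ofReal_ne_zero T wt hwt n w₁),
    mul_div_cancel_left₀ _ (lamN_ofReal_ne_zero T wt hwt n w₂)]

theorem memℓp_two_of_eq_lamN_mul_iterate
    (hS : ∀ f v, S f v = (wt v : 𝕜) * f (T.par v)) {c : ℝ} (hc : 0 < c)
    (hb : ∀ f, c * ‖f‖ ≤ ‖S f‖) (n : ℕ) (f : ℓ²(V, 𝕜)) (g : V → 𝕜)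
    (hfg : ∀ w, f w = (lamN T wt n w : 𝕜) * g (T.par^[n] w)) : Memℓp g 2 := by
  classical
  have hcn : 0 < c ^ n := pow_pos hc n
  have htrunc : ∀ s : Finset V, c ^ n * ‖∑ x ∈ s, lp.single 2 x (g x)‖ ≤ ‖f‖ := fun s =>
    (ContinuousLinearMap.pow_mul_norm_le_norm_pow_apply hc.le hb n _).trans <|
      lp.norm_mono two_ne_zero fun w => by
        rw [weightedShift_pow_apply hS, hfg, lp.coeFn_sum, Finset.sum_apply]
        simp only [lp.coeFn_single, Finset.sum_pi_single]
        split_ifs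
        · exact le_rfl
        · rw [mul_zero, norm_zero]
          exact norm_nonneg _
  refine memℓp_gen (summable_of_sum_le (c := (‖f‖ / c ^ n) ^ 2) (fun _ => by positivity)
    fun s => ?_)
  have hs := lp.norm_sum_single (E := fun _ : V => 𝕜) (p := 2) (by norm_num) g s
  simp only [ENNReal.toReal_ofNat, Real.rpow_two] at hs ⊢
  rw [← hs]
  gcongr
  rw [le_div_iff₀ hcn, mul_comm]
  exact htrunc s

theorem mem_range_weightedShift_pow (hwt : ∀ u, 0 < wt u)
    (hS : ∀ f v, S f v = (wt v : 𝕜) * f (T.par v)) {c : ℝ} (hc : 0 < c)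
    (hb : ∀ f, c * ‖f‖ ≤ ‖S f‖) (n : ℕ) (f : ℓ²(V, 𝕜))
    (hf : ∀ w₁ w₂, T.par^[n] w₁ = T.par^[n] w₂ →
      f w₁ / (lamN T wt n w₁ : 𝕜) = f w₂ / (lamN T wt n w₂ : 𝕜)) :
    f ∈ Set.range (S ^ n) := by
  have hsurj := T.surjective_par.iterate n
  set g : V → 𝕜 := fun u =>
    f (Function.surjInv hsurj u) / (lamN T wt n (Function.surjInv hsurj u) : 𝕜)
  have hfg : ∀ w, f w = (lamN T wt n w : 𝕜) * g (T.par^[n] w) := fun w => by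
    rw [show g (T.par^[n] w) = f w / lamN T wt n w from
      (hf w _ (Function.surjInv_eq hsurj _).symm).symm,
      mul_div_cancel₀ _ (lamN_ofReal_ne_zero T wt hwt n w)]
  refine ⟨⟨g, memℓp_two_of_eq_lamN_mul_iterate hS hc hb n f g hfg⟩,
    lp.ext <| funext fun w => ?_⟩
  rw [weightedShift_pow_apply hS, hfg]

end WeightedShift

theorem stmt14_general {V : Type*} (T : RootlessTree V)
    (wt : V → ℝ) (hwt : ∀ u : V, 0 < wt u)
    (S : lp (fun _ : V => ℂ) 2 →L[ℂ] lp (fun _ : V => ℂ) 2)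
    (hS : ∀ (f : lp (fun _ : V => ℂ) 2) (v : V), (S f) v = (wt v : ℂ) * f (T.par v))
    (hleft : ∃ c : ℝ, 0 < c ∧ ∀ f : lp (fun _ : V => ℂ) 2, c * ‖f‖ ≤ ‖S f‖)
    (n : ℕ) :
    Set.range ⇑(S ^ n) =
      {f : lp (fun _ : V => ℂ) 2 | ∀ v w₁ w₂ : V,
        T.par^[n] w₁ = v → T.par^[n] w₂ = v →
          f w₁ / (lamN T wt n w₁ : ℂ) = f w₂ / (lamN T wt n w₂ : ℂ)} := by
  obtain ⟨c, hc, hb⟩ := hleft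
  ext f
  constructor
  · rintro ⟨g, rfl⟩ v w₁ w₂ rfl h₂
    exact weightedShift_pow_div_lamN_eq hwt hS n g h₂.symm
  · intro hf
    exact mem_range_weightedShift_pow hwt hS hc hb n f fun w₁ w₂ h => hf _ w₁ w₂ rfl h.symm

/-- For a bounded left-invertible weighted shift `S_λ` and `n ≥ 1`, the range of `S_λⁿ`
consists exactly of those `f ∈ ℓ²(V)` such that `f/λ⁽ⁿ⁾` is constant on `Chiⁿ(v)` for
every vertex `v`. -/
theorem stmt14 {V : Type*} [Countable V] [Infinite V] (T : RootlessTree V)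
    (wt : V → ℝ) (hwt : ∀ u : V, 0 < wt u)
    (S : lp (fun _ : V => ℂ) 2 →L[ℂ] lp (fun _ : V => ℂ) 2)
    (hS : ∀ (f : lp (fun _ : V => ℂ) 2) (v : V), (S f) v = (wt v : ℂ) * f (T.par v))
    (hleft : ∃ c : ℝ, 0 < c ∧ ∀ f : lp (fun _ : V => ℂ) 2, c * ‖f‖ ≤ ‖S f‖)
    (n : ℕ) (hn : 1 ≤ n) :
    Set.range ⇑(S ^ n) =
      {f : lp (fun _ : V => ℂ) 2 | ∀ v w₁ w₂ : V,
        T.par^[n] w₁ = v → T.par^[n] w₂ = v →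
          f w₁ / (lamN T wt n w₁ : ℂ) = f w₂ / (lamN T wt n w₂ : ℂ)} :=
  stmt14_general T wt hwt S hS hleft n
end

section
/- Let S_λ be a bounded left-invertible weighted shift on a rootless, leafless directed tree T = (V,E). Then exactly one of the following holds: (i) α_λ(v) = ∞ for all v ∈ V, which occurs if and only if S_λ is analytic; or (ii) α_λ(v) < ∞ for all v ∈ V, which occurs if and only if the hyper-range ∩_{n≥0} S_λ^n(ℓ²(V)) is infinite-dimensional. In particular, if α_λ(v) < ∞ for some v ∈ V, then α_λ(w) < ∞ for every w ∈ V. -/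
open scoped ENNReal

/-!
Write `h_v(w) = λ⁽ⁿ⁾(w) / λ⁽ⁿ⁾(v)` for any `n` with `parⁿ v = parⁿ w`, and `h_v(w) = 0` when there
is no such `n`; then `α_λ(v) = Σ_w h_v(w)²`. Since `h_v(w) λ_v = λ_w h_{par v}(par w)`, grouping
the vertices by their parents gives `λ_v² α_λ(v) = Σ_u ‖S e_u‖² h_{par v}(u)²`, and
`c ≤ ‖S e_u‖ ≤ ‖S‖` shows that `α_λ(v)` and `α_λ(par v)` are finite together; as any two vertices
have a common ancestor, finiteness at one vertex spreads to all of them.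

A vector `g` of the hyper-range satisfies `|g(w)| = h_v(w) |g(v)|`, so `g(v) ≠ 0` forces
`α_λ(v) ≤ ‖g‖² / |g(v)|² < ∞`. Conversely, if `α_λ` is finite, every `h_v` lies in `ℓ²` and
`h_v = S^n (h_{parⁿ v} / λ⁽ⁿ⁾(v))` lies in the hyper-range; the vectors `h_{parᵐ v}` are linearly
independent because distinct ancestors of `v` are never in the same generation.
-/

open scoped ENNReal lp

theorem lp.hasSum_norm_sq {α : Type*} {E : α → Type*} [∀ i, NormedAddCommGroup (E i)]
    (f : lp E 2) : HasSum (fun i => ‖f i‖ ^ 2) (‖f‖ ^ 2) := by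
  simpa [Real.rpow_two] using lp.hasSum_norm (p := 2) (by norm_num) f

theorem ENNReal.tsum_mul_lt_top_iff_of_mem_Icc {ι : Type*} {c x : ι → ℝ≥0∞} {a b : ℝ≥0∞}
    (ha : a ≠ 0) (hb : b ≠ ⊤) (hc : ∀ i, c i ∈ Set.Icc a b) :
    ∑' i, c i * x i < ⊤ ↔ ∑' i, x i < ⊤ := by
  constructor
  · intro h
    refine ENNReal.lt_top_of_mul_ne_top_right ?_ ha
    rw [← ENNReal.tsum_mul_left]
    exact ne_top_of_le_ne_top h.ne (ENNReal.tsum_le_tsum fun i => by gcongr; exact (hc i).1)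
  · intro h
    calc ∑' i, c i * x i ≤ ∑' i, b * x i := ENNReal.tsum_le_tsum fun i => by gcongr; exact (hc i).2
      _ = b * ∑' i, x i := ENNReal.tsum_mul_left
      _ < ⊤ := ENNReal.mul_lt_top hb.lt_top h

namespace RootlessTree

variable {V : Type*} (T : RootlessTree V) (wt : V → ℝ)

theorem iterate_eq_of_le {u w : V} {m n : ℕ} (h : T.par^[m] u = T.par^[m] w) (hmn : m ≤ n) :
    T.par^[n] u = T.par^[n] w := by
  obtain ⟨k, rfl⟩ := Nat.exists_eq_add_of_le hmn
  rw [add_comm, Function.iterate_add_apply, Function.iterate_add_apply, h]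

def SameGen (u w : V) : Prop := ∃ n, T.par^[n] u = T.par^[n] w

theorem sameGen_par_iff {u w : V} : T.SameGen (T.par u) (T.par w) ↔ T.SameGen u w :=
  ⟨fun ⟨n, hn⟩ => ⟨n + 1, hn⟩, fun ⟨n, hn⟩ => ⟨n, (T.iterate_eq_of_le hn n.le_succ :)⟩⟩

theorem eq_of_sameGen_iterate {v : V} {m k : ℕ} (h : T.SameGen (T.par^[m] v) (T.par^[k] v)) :
    m = k := by
  obtain ⟨a, ha⟩ := h
  simp only [← Function.iterate_add_apply] at ha
  by_contra hmk
  wlog hlt : m < k generalizing m k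
  · exact this ha.symm (Ne.symm hmk) (by omega)
  refine T.acyclic (T.par^[a + m] v) (k - m) (by omega) ?_
  rw [← Function.iterate_add_apply, show k - m + (a + m) = a + k by omega, ha]

open Classical in
theorem mem_Aset_iff {v w : V} {n : ℕ} : w ∈ Aset T v n ↔ ∃ h : T.SameGen v w, Nat.find h = n := by
  refine ⟨fun hw => ?_, ?_⟩
  · have hmin : T.par^[n] v = T.par^[n] w ∧ ∀ m < n, T.par^[m] v ≠ T.par^[m] w := by
      cases n with
      | zero => simp_all [Aset]
      | succ n => exact ⟨hw.1.symm, fun m hm he => hw.2 (T.iterate_eq_of_le he (by omega)).symm⟩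
    exact ⟨⟨n, hmin.1⟩, (Nat.find_eq_iff _).2 hmin⟩
  · rintro ⟨h, rfl⟩
    have hmin := (Nat.find_eq_iff h).1 rfl
    cases hn : Nat.find h with
    | zero => simp_all [Aset]
    | succ n =>
      rw [hn] at hmin
      exact ⟨hmin.1.symm, fun he => hmin.2 n n.lt_succ_self he.symm⟩

theorem lamN_pos (hwt : ∀ u, 0 < wt u) (n : ℕ) (u : V) : 0 < lamN T wt n u :=
  Finset.prod_pos fun _ _ => hwt _

theorem lamN_add (m n : ℕ) (u : V) :
    lamN T wt (m + n) u = lamN T wt m u * lamN T wt n (T.par^[m] u) := by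
  rw [lamN, Finset.prod_range_add]
  congr 1
  exact Finset.prod_congr rfl fun j _ => by rw [add_comm, Function.iterate_add_apply]

theorem lamN_one (u : V) : lamN T wt 1 u = wt u := by
  simp [lamN]

theorem lamN_succ (n : ℕ) (u : V) : lamN T wt (n + 1) u = wt u * lamN T wt n (T.par u) := by
  rw [add_comm, lamN_add, lamN_one, Function.iterate_one]

theorem lamN_div_lamN_eq (hwt : ∀ u, 0 < wt u) {v w : V} {m n : ℕ}
    (hm : T.par^[m] v = T.par^[m] w) (hn : T.par^[n] v = T.par^[n] w) :
    lamN T wt m w / lamN T wt m v = lamN T wt n w / lamN T wt n v := by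
  wlog hmn : m ≤ n generalizing m n
  · exact (this hn hm (by omega)).symm
  obtain ⟨k, rfl⟩ := Nat.exists_eq_add_of_le hmn
  rw [lamN_add, lamN_add, hm]
  exact (mul_div_mul_right _ _ (lamN_pos T wt hwt k _).ne').symm

open Classical in
/-- The function `h_v(w)` of the sketch above. -/
noncomputable def genRatio (v w : V) : ℝ :=
  if h : T.SameGen v w then lamN T wt h.choose w / lamN T wt h.choose v else 0

theorem genRatio_eq (hwt : ∀ u, 0 < wt u) {v w : V} {n : ℕ} (h : T.par^[n] v = T.par^[n] w) :
    T.genRatio wt v w = lamN T wt n w / lamN T wt n v := by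
  have hvw : T.SameGen v w := ⟨n, h⟩
  rw [genRatio, dif_pos hvw]
  exact lamN_div_lamN_eq T wt hwt hvw.choose_spec h

theorem genRatio_of_not_sameGen {v w : V} (h : ¬ T.SameGen v w) : T.genRatio wt v w = 0 :=
  dif_neg h

theorem genRatio_self (hwt : ∀ u, 0 < wt u) (v : V) : T.genRatio wt v v = 1 := by
  simp [genRatio_eq T wt hwt (n := 0) rfl, lamN]

theorem genRatio_nonneg (hwt : ∀ u, 0 < wt u) (v w : V) : 0 ≤ T.genRatio wt v w := by
  by_cases h : T.SameGen v w
  · obtain ⟨n, hn⟩ := h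
    rw [genRatio_eq T wt hwt hn]
    exact div_nonneg (lamN_pos T wt hwt n w).le (lamN_pos T wt hwt n v).le
  · rw [genRatio_of_not_sameGen T wt h]

theorem genRatio_mul_wt (hwt : ∀ u, 0 < wt u) (v w : V) :
    T.genRatio wt v w * wt v = wt w * T.genRatio wt (T.par v) (T.par w) := by
  by_cases h : T.SameGen (T.par v) (T.par w)
  · obtain ⟨n, hn⟩ := h
    rw [genRatio_eq T wt hwt hn, genRatio_eq T wt hwt (n := n + 1) hn, lamN_succ, lamN_succ]
    have := (lamN_pos T wt hwt n (T.par v)).ne'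
    have := (hwt v).ne'
    field_simp
  · rw [genRatio_of_not_sameGen T wt h,
      genRatio_of_not_sameGen T wt (T.sameGen_par_iff.not.mp h), zero_mul, mul_zero]

theorem genRatio_mul_lamN (hwt : ∀ u, 0 < wt u) (n : ℕ) (v w : V) :
    T.genRatio wt v w * lamN T wt n v =
      lamN T wt n w * T.genRatio wt (T.par^[n] v) (T.par^[n] w) := by
  induction n generalizing v w with
  | zero => simp [lamN]
  | succ n ih =>
    rw [lamN_succ, lamN_succ, Function.iterate_succ_apply, Function.iterate_succ_apply]
    linear_combination lamN T wt n (T.par v) * genRatio_mul_wt T wt hwt v w +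
      wt w * ih (T.par v) (T.par w)

theorem alphaFun_eq_tsum_genRatio (hwt : ∀ u, 0 < wt u) (v : V) :
    alphaFun T wt v = ∑' w, ENNReal.ofReal (T.genRatio wt v w ^ 2) := by
  classical
  have hinj : Function.Injective fun p : Σ n, Aset T v n => (p.2 : V) := by
    rintro ⟨n, w, hw⟩ ⟨m, w', hw'⟩ (rfl : w = w')
    obtain ⟨h, rfl⟩ := (T.mem_Aset_iff).1 hw
    obtain ⟨h', rfl⟩ := (T.mem_Aset_iff).1 hw'
    rfl
  have hsupp : Function.support (fun w => ENNReal.ofReal (T.genRatio wt v w ^ 2)) ⊆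
      Set.range fun p : Σ n, Aset T v n => (p.2 : V) := by
    intro w hw
    have h : T.SameGen v w := by
      by_contra h
      simp [genRatio_of_not_sameGen T wt h] at hw
    exact ⟨⟨_, w, (T.mem_Aset_iff).2 ⟨h, rfl⟩⟩, rfl⟩
  rw [← hinj.tsum_eq hsupp, ENNReal.tsum_sigma', alphaFun]
  refine tsum_congr fun n => tsum_congr fun w => ?_
  obtain ⟨h, hn⟩ := (T.mem_Aset_iff).1 w.2
  rw [genRatio_eq T wt hwt (hn ▸ Nat.find_spec h)]

noncomputable def childWeight (u : V) : ℝ≥0∞ :=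
  ∑' w : {w // T.par w = u}, ENNReal.ofReal (wt w ^ 2)

theorem ofReal_sq_mul_alphaFun (hwt : ∀ u, 0 < wt u) (v : V) :
    ENNReal.ofReal (wt v ^ 2) * alphaFun T wt v =
      ∑' u, T.childWeight wt u * ENNReal.ofReal (T.genRatio wt (T.par v) u ^ 2) := by
  rw [alphaFun_eq_tsum_genRatio T wt hwt, ← ENNReal.tsum_mul_left,
    ← (Equiv.sigmaFiberEquiv T.par).tsum_eq, ENNReal.tsum_sigma']
  refine tsum_congr fun u => ?_
  rw [childWeight, ← ENNReal.tsum_mul_right]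
  refine tsum_congr fun ⟨w, hw⟩ => ?_
  rw [Equiv.sigmaFiberEquiv_apply, ← ENNReal.ofReal_mul (by positivity),
    ← ENNReal.ofReal_mul (by positivity), ← mul_pow, ← mul_pow, mul_comm (wt v),
    genRatio_mul_wt T wt hwt, hw]

theorem alphaFun_lt_top_iff_par (hwt : ∀ u, 0 < wt u) {a b : ℝ≥0∞} (ha : a ≠ 0) (hb : b ≠ ⊤)
    (hcw : ∀ u, T.childWeight wt u ∈ Set.Icc a b) (v : V) :
    alphaFun T wt v < ⊤ ↔ alphaFun T wt (T.par v) < ⊤ := by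
  have hv : ENNReal.ofReal (wt v ^ 2) ≠ 0 := (ENNReal.ofReal_pos.2 (pow_pos (hwt v) 2)).ne'
  rw [alphaFun_eq_tsum_genRatio T wt hwt (T.par v),
    ← ENNReal.tsum_mul_lt_top_iff_of_mem_Icc ha hb hcw, ← ofReal_sq_mul_alphaFun T wt hwt]
  exact ⟨ENNReal.mul_lt_top ENNReal.ofReal_lt_top,
    fun h => ENNReal.lt_top_of_mul_ne_top_right h.ne hv⟩

theorem alphaFun_lt_top_iff_iterate (hwt : ∀ u, 0 < wt u) {a b : ℝ≥0∞} (ha : a ≠ 0)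
    (hb : b ≠ ⊤) (hcw : ∀ u, T.childWeight wt u ∈ Set.Icc a b) (n : ℕ) (v : V) :
    alphaFun T wt v < ⊤ ↔ alphaFun T wt (T.par^[n] v) < ⊤ := by
  induction n with
  | zero => rfl
  | succ n ih =>
    rw [Function.iterate_succ_apply']
    exact ih.trans (alphaFun_lt_top_iff_par T wt hwt ha hb hcw _)

theorem alphaFun_lt_top_of_exists (hwt : ∀ u, 0 < wt u) {a b : ℝ≥0∞} (ha : a ≠ 0) (hb : b ≠ ⊤)
    (hcw : ∀ u, T.childWeight wt u ∈ Set.Icc a b) :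
    (∃ u, alphaFun T wt u < ⊤) → ∀ w, alphaFun T wt w < ⊤ := by
  rintro ⟨u, hu⟩ w
  obtain ⟨k, l, h⟩ := T.connected u w
  rwa [alphaFun_lt_top_iff_iterate T wt hwt ha hb hcw l, ← h,
    ← alphaFun_lt_top_iff_iterate T wt hwt ha hb hcw k]

theorem memℓp_genRatio (hwt : ∀ u, 0 < wt u) {v : V} (hv : alphaFun T wt v < ⊤) :
    Memℓp (fun w => (T.genRatio wt v w : ℂ)) 2 := by
  rw [alphaFun_eq_tsum_genRatio T wt hwt] at hv
  refine memℓp_gen ?_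
  simpa [ENNReal.toReal_ofReal (sq_nonneg _), sq_abs] using ENNReal.summable_toReal hv.ne

noncomputable def genRatioLp (hwt : ∀ u, 0 < wt u) (hα : ∀ u, alphaFun T wt u < ⊤) (v : V) :
    ℓ^2(V, ℂ) :=
  ⟨fun w => (T.genRatio wt v w : ℂ), memℓp_genRatio T wt hwt (hα v)⟩

theorem genRatioLp_iterate_apply (hwt : ∀ u, 0 < wt u) (hα : ∀ u, alphaFun T wt u < ⊤) (v : V)
    (m k : ℕ) : T.genRatioLp wt hwt hα (T.par^[m] v) (T.par^[k] v) = if m = k then 1 else 0 := by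
  change (T.genRatio wt _ _ : ℂ) = _
  split_ifs with hmk
  · rw [hmk, genRatio_self T wt hwt, Complex.ofReal_one]
  · rw [genRatio_of_not_sameGen T wt fun h => hmk (T.eq_of_sameGen_iterate h), Complex.ofReal_zero]

theorem linearIndependent_genRatioLp_iterate (hwt : ∀ u, 0 < wt u)
    (hα : ∀ u, alphaFun T wt u < ⊤) (v : V) :
    LinearIndependent ℂ fun m : ℕ => T.genRatioLp wt hwt hα (T.par^[m] v) := by
  classical
  let restrict : ℓ^2(V, ℂ) →ₗ[ℂ] (ℕ → ℂ) :=
    { toFun := fun g k => g (T.par^[k] v)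
      map_add' := fun _ _ => rfl
      map_smul' := fun _ _ => rfl }
  have hdelta : restrict ∘ (fun m => T.genRatioLp wt hwt hα (T.par^[m] v)) =
      fun m => Pi.single m 1 := by
    funext m k
    exact (T.genRatioLp_iterate_apply wt hwt hα v m k).trans (by simp [Pi.single_apply, eq_comm])
  exact .of_comp restrict (hdelta ▸ Pi.linearIndependent_single_one ℕ ℂ)

def IsWeightedShift (S : ℓ^2(V, ℂ) →L[ℂ] ℓ^2(V, ℂ)) : Prop :=
  ∀ f v, S f v = wt v * f (T.par v)

variable {T wt} {S : ℓ^2(V, ℂ) →L[ℂ] ℓ^2(V, ℂ)}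

namespace IsWeightedShift

theorem pow_apply (hS : T.IsWeightedShift wt S) (n : ℕ) (f : ℓ^2(V, ℂ)) (w : V) :
    (S ^ n) f w = lamN T wt n w * f (T.par^[n] w) := by
  induction n generalizing f with
  | zero => simp [lamN]
  | succ n ih =>
    rw [pow_succ]
    change (S ^ n) (S f) w = _
    rw [ih, hS, lamN_add T wt n 1, lamN_one, Function.iterate_succ_apply']
    push_cast
    ring

open Classical in
theorem childWeight_eq (hS : T.IsWeightedShift wt S) (u : V) :
    T.childWeight wt u = ENNReal.ofReal (‖S (lp.single 2 u 1)‖ ^ 2) := by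
  have hsq := lp.hasSum_norm_sq (S (lp.single 2 u 1))
  rw [← hsq.tsum_eq, ENNReal.ofReal_tsum_of_nonneg (fun _ => by positivity) hsq.summable,
    childWeight]
  refine (tsum_subtype {w | T.par w = u} fun w => ENNReal.ofReal (wt w ^ 2)).trans
    (tsum_congr fun w => ?_)
  rw [Set.indicator_apply, hS]
  by_cases h : T.par w = u
  · simp [h, sq_abs]
  · simp [h]

open Classical in
theorem childWeight_mem_Icc (hS : T.IsWeightedShift wt S) {c : ℝ} (hc : 0 ≤ c)
    (hleft : ∀ f, c * ‖f‖ ≤ ‖S f‖) (u : V) :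
    T.childWeight wt u ∈ Set.Icc (ENNReal.ofReal (c ^ 2)) (ENNReal.ofReal (‖S‖ ^ 2)) := by
  have hnorm : ‖(lp.single 2 u 1 : ℓ^2(V, ℂ))‖ = 1 := by simp
  rw [hS.childWeight_eq]
  constructor <;> gcongr
  · simpa [hnorm] using hleft (lp.single 2 u 1)
  · exact S.unit_le_opNorm _ hnorm.le

theorem genRatio_mul_norm_le (hwt : ∀ u, 0 < wt u) (hS : T.IsWeightedShift wt S)
    {g : ℓ^2(V, ℂ)} (hg : g ∈ ⋂ n, Set.range ⇑(S ^ n)) (v w : V) :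
    T.genRatio wt v w * ‖g v‖ ≤ ‖g w‖ := by
  by_cases h : T.SameGen v w
  · obtain ⟨n, hn⟩ := h
    obtain ⟨f, rfl⟩ := Set.mem_iInter.1 hg n
    have := (lamN_pos T wt hwt n v).ne'
    apply le_of_eq
    rw [genRatio_eq T wt hwt hn, hS.pow_apply, hS.pow_apply, hn, norm_mul, norm_mul,
      Complex.norm_real, Complex.norm_real, Real.norm_of_nonneg (lamN_pos T wt hwt n v).le,
      Real.norm_of_nonneg (lamN_pos T wt hwt n w).le]
    field_simp
  · rw [genRatio_of_not_sameGen T wt h, zero_mul]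
    exact norm_nonneg _

theorem alphaFun_lt_top_of_mem_iInter (hwt : ∀ u, 0 < wt u) (hS : T.IsWeightedShift wt S)
    {g : ℓ^2(V, ℂ)} (hg : g ∈ ⋂ n, Set.range ⇑(S ^ n)) {v : V} (hv : g v ≠ 0) :
    alphaFun T wt v < ⊤ := by
  have hsq := lp.hasSum_norm_sq g
  have hgv : ENNReal.ofReal (‖g v‖ ^ 2) ≠ 0 := by simpa using hv
  refine ENNReal.lt_top_of_mul_ne_top_left
    (ne_top_of_le_ne_top (ENNReal.ofReal_ne_top (r := ‖g‖ ^ 2)) ?_) hgv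
  calc alphaFun T wt v * ENNReal.ofReal (‖g v‖ ^ 2)
      = ∑' w, ENNReal.ofReal ((T.genRatio wt v w * ‖g v‖) ^ 2) := by
        rw [alphaFun_eq_tsum_genRatio T wt hwt, ← ENNReal.tsum_mul_right]
        refine tsum_congr fun w => ?_
        rw [mul_pow, ENNReal.ofReal_mul (sq_nonneg _)]
    _ ≤ ∑' w, ENNReal.ofReal (‖g w‖ ^ 2) := ENNReal.tsum_le_tsum fun w =>
        ENNReal.ofReal_le_ofReal (pow_le_pow_left₀ (mul_nonneg (genRatio_nonneg T wt hwt v w)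
          (norm_nonneg _)) (hS.genRatio_mul_norm_le hwt hg v w) 2)
    _ = ENNReal.ofReal (‖g‖ ^ 2) := by
      rw [← ENNReal.ofReal_tsum_of_nonneg (fun _ => by positivity) hsq.summable, hsq.tsum_eq]

theorem iInter_range_pow_eq_zero (hwt : ∀ u, 0 < wt u) (hS : T.IsWeightedShift wt S)
    (hα : ∀ u, alphaFun T wt u = ⊤) : ⋂ n, Set.range ⇑(S ^ n) = {0} := by
  refine Set.Subset.antisymm (fun g hg => ?_)
    (Set.singleton_subset_iff.2 (Set.mem_iInter.2 fun n => ⟨0, map_zero _⟩))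
  by_contra hg0
  obtain ⟨v, hv⟩ : ∃ v, g v ≠ 0 := by
    by_contra! h
    exact hg0 (lp.ext (funext h))
  exact (hS.alphaFun_lt_top_of_mem_iInter hwt hg hv).ne (hα v)

theorem genRatioLp_mem_range_pow (hwt : ∀ u, 0 < wt u) (hS : T.IsWeightedShift wt S)
    (hα : ∀ u, alphaFun T wt u < ⊤) (n : ℕ) (v : V) :
    T.genRatioLp wt hwt hα v ∈ Set.range ⇑(S ^ n) := by
  refine ⟨(lamN T wt n v : ℂ)⁻¹ • T.genRatioLp wt hwt hα (T.par^[n] v), lp.ext (funext fun w => ?_)⟩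
  have hv : (lamN T wt n v : ℂ) ≠ 0 := by exact_mod_cast (lamN_pos T wt hwt n v).ne'
  have key : (T.genRatio wt v w * lamN T wt n v : ℂ) =
      lamN T wt n w * T.genRatio wt (T.par^[n] v) (T.par^[n] w) := by
    exact_mod_cast genRatio_mul_lamN T wt hwt n v w
  rw [hS.pow_apply, lp.coeFn_smul, Pi.smul_apply, smul_eq_mul]
  change _ * (_ * (T.genRatio wt _ _ : ℂ)) = (T.genRatio wt _ _ : ℂ)
  field_simp
  linear_combination key.symm

theorem not_iInter_range_pow_subset_span [Nonempty V] (hwt : ∀ u, 0 < wt u)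
    (hS : T.IsWeightedShift wt S) (hα : ∀ u, alphaFun T wt u < ⊤) :
    ¬ ∃ s : Finset ℓ^2(V, ℂ), ⋂ n, Set.range ⇑(S ^ n) ⊆ Submodule.span ℂ (s : Set ℓ^2(V, ℂ)) := by
  rintro ⟨s, hs⟩
  obtain ⟨v⟩ := ‹Nonempty V›
  have : Finite ℕ := (linearIndependent_genRatioLp_iterate T wt hwt hα v).finite_of_le_span_finite
    _ s (Set.range_subset_iff.2 fun m => hs (Set.mem_iInter.2 fun n =>
      hS.genRatioLp_mem_range_pow hwt hα n _))
  exact not_finite ℕ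

end IsWeightedShift

end RootlessTree

theorem stmt17_general {V : Type*} [Infinite V] (T : RootlessTree V)
    (wt : V → ℝ) (hwt : ∀ u : V, 0 < wt u)
    (S : lp (fun _ : V => ℂ) 2 →L[ℂ] lp (fun _ : V => ℂ) 2)
    (hS : ∀ (f : lp (fun _ : V => ℂ) 2) (v : V), (S f) v = (wt v : ℂ) * f (T.par v))
    (hleft : ∃ c : ℝ, 0 < c ∧ ∀ f : lp (fun _ : V => ℂ) 2, c * ‖f‖ ≤ ‖S f‖) :
    Xor' (∀ u : V, alphaFun T wt u = ⊤) (∀ u : V, alphaFun T wt u < ⊤) ∧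
      ((∀ u : V, alphaFun T wt u = ⊤) ↔ (⋂ n : ℕ, Set.range ⇑(S ^ n)) = {0}) ∧
      ((∀ u : V, alphaFun T wt u < ⊤) ↔
        ¬ ∃ s : Finset (lp (fun _ : V => ℂ) 2),
          (⋂ n : ℕ, Set.range ⇑(S ^ n)) ⊆
            (Submodule.span ℂ (s : Set (lp (fun _ : V => ℂ) 2)) :
              Set (lp (fun _ : V => ℂ) 2))) ∧
      ((∃ u : V, alphaFun T wt u < ⊤) → ∀ w : V, alphaFun T wt w < ⊤) := by
  obtain ⟨c, hc, hcS⟩ := hleft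
  have hshift : T.IsWeightedShift wt S := hS
  have hprop := T.alphaFun_lt_top_of_exists wt hwt (ENNReal.ofReal_pos.2 (pow_pos hc 2)).ne'
    ENNReal.ofReal_ne_top (hshift.childWeight_mem_Icc hc.le hcS)
  have hzero := hshift.iInter_range_pow_eq_zero hwt
  have hinf := hshift.not_iInter_range_pow_subset_span hwt
  have hdich : (∀ u, alphaFun T wt u = ⊤) ∨ ∀ u, alphaFun T wt u < ⊤ := by
    by_cases h : ∃ u, alphaFun T wt u < ⊤
    · exact .inr (hprop h)
    · exact .inl fun u => not_lt_top_iff.1 fun hu => h ⟨u, hu⟩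
  have hexcl : ¬ ((∀ u, alphaFun T wt u = ⊤) ∧ ∀ u, alphaFun T wt u < ⊤) :=
    fun ⟨h, h'⟩ => (h' (Classical.arbitrary V)).ne (h _)
  have hspan (h : ⋂ n, Set.range ⇑(S ^ n) = {0}) :
      ∃ s : Finset (lp (fun _ : V => ℂ) 2), ⋂ n, Set.range ⇑(S ^ n) ⊆
        Submodule.span ℂ (s : Set (lp (fun _ : V => ℂ) 2)) := ⟨∅, by rw [h]; simp⟩
  exact ⟨(xor_iff_or_and_not_and _ _).2 ⟨hdich, hexcl⟩,
    ⟨hzero, fun h => hdich.resolve_right fun hα => hinf hα (hspan h)⟩,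
    ⟨hinf, fun h => hdich.resolve_left fun hα => h (hspan (hzero hα))⟩, hprop⟩

/-- Dichotomy for a bounded left-invertible weighted shift on a rootless directed
tree: either `α_λ ≡ ∞` (equivalently, `S_λ` is analytic) or `α_λ` is everywhere
finite (equivalently, the hyper-range is infinite-dimensional); exactly one of the
two alternatives holds, and finiteness of `α_λ` at one vertex propagates to all. -/
theorem stmt17 {V : Type*} [Countable V] [Infinite V] (T : RootlessTree V)
    (wt : V → ℝ) (hwt : ∀ u : V, 0 < wt u)
    (S : lp (fun _ : V => ℂ) 2 →L[ℂ] lp (fun _ : V => ℂ) 2)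
    (hS : ∀ (f : lp (fun _ : V => ℂ) 2) (v : V), (S f) v = (wt v : ℂ) * f (T.par v))
    (hleft : ∃ c : ℝ, 0 < c ∧ ∀ f : lp (fun _ : V => ℂ) 2, c * ‖f‖ ≤ ‖S f‖) :
    Xor' (∀ u : V, alphaFun T wt u = ⊤) (∀ u : V, alphaFun T wt u < ⊤) ∧
      ((∀ u : V, alphaFun T wt u = ⊤) ↔ (⋂ n : ℕ, Set.range ⇑(S ^ n)) = {0}) ∧
      ((∀ u : V, alphaFun T wt u < ⊤) ↔
        ¬ ∃ s : Finset (lp (fun _ : V => ℂ) 2),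
          (⋂ n : ℕ, Set.range ⇑(S ^ n)) ⊆
            (Submodule.span ℂ (s : Set (lp (fun _ : V => ℂ) 2)) :
              Set (lp (fun _ : V => ℂ) 2))) ∧
      ((∃ u : V, alphaFun T wt u < ⊤) → ∀ w : V, alphaFun T wt w < ⊤) :=
  stmt17_general T wt hwt S hS hleft
end
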